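/- Let ψ: ℝ → ℂ be a Schwartz function with ∫_ℝ ψ(x) dx ≠ 0, and for λ ≥ 2 set ψ_λ(x) := λ ψ(λ x). Then there is a constant c = c(ψ) > 0 such that ‖ψ_λ‖²_{H^{-1/2}(ℝ)} ≥ c log λ for all λ ≥ 2. -/

import Mathlib

/-!
Rescaling gives `𝓕 ψ_λ (ξ) = 𝓕 ψ (ξ / λ)`, and `𝓕 ψ (0) = ∫ ψ ≠ 0`, so by continuity
`‖𝓕 ψ‖ ≥ ‖∫ ψ‖ / 2` on some `[-δ, δ]`; hence `‖𝓕 ψ_λ‖ ≥ ‖∫ ψ‖ / 2` on `[δ, δλ]`. There the weight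
`(1 + ξ²)^(-1/2)` dominates `δ / (1 + δ) · ξ⁻¹`, whose integral over `[δ, δλ]` is exactly
`δ / (1 + δ) · log λ`.
-/

open MeasureTheory
open scoped FourierTransform SchwartzMap

theorem Real.fourier_comp_mul_smul {E : Type*} [NormedAddCommGroup E] [NormedSpace ℂ E]
    (f : ℝ → E) {lam : ℝ} (hlam : 0 < lam) (ξ : ℝ) :
    𝓕 (fun x => lam • f (lam * x)) ξ = 𝓕 f (ξ / lam) := by
  have hsubst := Measure.integral_comp_mul_left (fun y => 𝐞 (-(y * (ξ / lam))) • f y) lam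
  rw [abs_of_pos (inv_pos.2 hlam), eq_inv_smul_iff₀ hlam.ne'] at hsubst
  simp only [Real.fourier_real_eq, smul_comm _ lam, integral_smul]
  rw [← hsubst]
  congr 3 with x
  field_simp

theorem Real.fourier_zero {E : Type*} [NormedAddCommGroup E] [NormedSpace ℂ E] (f : ℝ → E) :
    𝓕 f 0 = ∫ x, f x := by
  simp [Real.fourier_real_eq]

theorem exists_pos_forall_abs_le_half_norm_le {E : Type*} [NormedAddCommGroup E] {f : ℝ → E}
    (hf : ContinuousAt f 0) (hf0 : f 0 ≠ 0) :
    ∃ δ > 0, ∀ u : ℝ, |u| ≤ δ → ‖f 0‖ / 2 ≤ ‖f u‖ := by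
  have hnear : ∀ᶠ u in nhds 0, ‖f 0‖ / 2 < ‖f u‖ :=
    hf.norm.eventually (lt_mem_nhds (half_lt_self (norm_pos_iff.2 hf0)))
  obtain ⟨δ, hδ, hball⟩ := Metric.nhds_basis_closedBall.eventually_iff.1 hnear
  refine ⟨δ, hδ, fun u hu => (hball ?_).le⟩
  rwa [Metric.mem_closedBall, Real.dist_0_eq_abs]

theorem mul_inv_le_one_add_sq_rpow_neg_half {δ ξ : ℝ} (hδ : 0 < δ) (hξ : δ ≤ ξ) :
    δ / (1 + δ) * ξ⁻¹ ≤ (1 + ξ ^ 2) ^ (-(1/2) : ℝ) := by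
  have hξ0 : 0 < ξ := hδ.trans_le hξ
  calc δ / (1 + δ) * ξ⁻¹ ≤ (1 + ξ)⁻¹ := by
        rw [div_mul_eq_mul_div, div_le_iff₀ (by positivity), ← div_eq_inv_mul,
          le_div_iff₀ (by positivity)]
        field_simp
        linarith
    _ ≤ (1 + ξ ^ 2) ^ (-(1/2) : ℝ) := by
        rw [Real.rpow_neg (by positivity), ← Real.sqrt_eq_rpow]
        gcongr
        exact Real.sqrt_le_iff.2 ⟨by positivity, by nlinarith⟩

theorem setIntegral_Icc_inv_eq_log {δ lam : ℝ} (hδ : 0 < δ) (hlam : 1 ≤ lam) :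
    ∫ ξ in Set.Icc δ (δ * lam), ξ⁻¹ = Real.log lam := by
  rw [integral_Icc_eq_integral_Ioc, ← intervalIntegral.integral_of_le (by nlinarith),
    integral_inv_of_pos hδ (by positivity), mul_div_cancel_left₀ _ hδ.ne']

theorem SchwartzMap.integrable_rpow_mul_norm_comp_div_sq {F : Type*} [NormedAddCommGroup F]
    [NormedSpace ℝ F] (Φ : 𝓢(ℝ, F)) {lam : ℝ} (hlam : lam ≠ 0) :
    Integrable (fun ξ : ℝ => (1 + ξ ^ 2) ^ (-(1/2) : ℝ) * ‖Φ (ξ / lam)‖ ^ 2) := by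
  have hsq : Integrable (fun ξ : ℝ => ‖Φ (ξ / lam)‖ ^ 2) :=
    ((Φ.memLp 2).integrable_norm_pow two_ne_zero).comp_div hlam
  refine hsq.mono' (Continuous.aestronglyMeasurable ?_) (ae_of_all _ fun ξ => ?_)
  · exact ((by fun_prop : Continuous fun ξ : ℝ => 1 + ξ ^ 2).rpow_const
      fun ξ => Or.inl (by positivity)).mul (by fun_prop)
  · rw [Real.norm_of_nonneg (by positivity)]
    exact mul_le_of_le_one_left (by positivity)
      (Real.rpow_le_one_of_one_le_of_nonpos (by nlinarith) (by norm_num))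

theorem nonzero_mean_scaling_lower_bound (ψ : SchwartzMap ℝ ℂ)
    (h : (∫ x : ℝ, ψ x) ≠ 0) :
    ∃ c : ℝ, 0 < c ∧ ∀ lam : ℝ, 2 ≤ lam →
      c * Real.log lam ≤
        ∫ ξ : ℝ, (1 + ξ ^ 2) ^ (-(1/2) : ℝ) *
          ‖𝓕 (fun x => (lam : ℂ) * ψ (lam * x)) ξ‖ ^ 2 := by
  obtain ⟨Φ, hΦ⟩ : ∃ Φ : 𝓢(ℝ, ℂ), ⇑Φ = 𝓕 ⇑ψ := ⟨𝓕 ψ, SchwartzMap.fourier_coe ψ⟩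
  have hΦ0 : Φ 0 ≠ 0 := by rwa [hΦ, Real.fourier_zero]
  obtain ⟨δ, hδ, hΦnear⟩ := exists_pos_forall_abs_le_half_norm_le Φ.continuous.continuousAt hΦ0
  set c := (‖Φ 0‖ / 2) ^ 2 * (δ / (1 + δ))
  refine ⟨c, by positivity [norm_pos_iff.2 hΦ0], fun lam hlam => ?_⟩
  have hlam0 : 0 < lam := by linarith
  have hrescale : ∀ ξ, 𝓕 (fun x => (lam : ℂ) * ψ (lam * x)) ξ = Φ (ξ / lam) := fun ξ => by
    simpa only [Complex.real_smul, hΦ] using Real.fourier_comp_mul_smul (⇑ψ) hlam0 ξ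
  simp_rw [hrescale]
  have hint := Φ.integrable_rpow_mul_norm_comp_div_sq hlam0.ne'
  have hpointwise : ∀ ξ ∈ Set.Icc δ (δ * lam),
      c * ξ⁻¹ ≤ (1 + ξ ^ 2) ^ (-(1/2) : ℝ) * ‖Φ (ξ / lam)‖ ^ 2 := by
    rintro ξ ⟨hδξ, hξδ⟩
    have hΦξ := hΦnear (ξ / lam) <| by
      rwa [abs_div, abs_of_pos hlam0, abs_of_pos (hδ.trans_le hδξ), div_le_iff₀ hlam0]
    calc c * ξ⁻¹ = δ / (1 + δ) * ξ⁻¹ * (‖Φ 0‖ / 2) ^ 2 := by ring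
      _ ≤ _ := by gcongr; exact mul_inv_le_one_add_sq_rpow_neg_half hδ hδξ
  calc c * Real.log lam = ∫ ξ in Set.Icc δ (δ * lam), c * ξ⁻¹ := by
        rw [integral_const_mul, setIntegral_Icc_inv_eq_log hδ (by linarith)]
    _ ≤ ∫ ξ in Set.Icc δ (δ * lam), (1 + ξ ^ 2) ^ (-(1/2) : ℝ) * ‖Φ (ξ / lam)‖ ^ 2 :=
        setIntegral_mono_on
          (continuousOn_const.mul (continuousOn_inv₀.mono fun ξ hξ =>
            (hδ.trans_le hξ.1).ne')).integrableOn_Icc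
          hint.integrableOn measurableSet_Icc hpointwise
    _ ≤ _ := setIntegral_le_integral hint (ae_of_all _ fun ξ => by positivity)
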